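/- arXiv:2303.06619 — 3 statements merged into one kernel-verified Lean document; each statement's English description precedes it below -/
import Mathlib

section
/- In a Coxeter system (W,S) with J ⊆ S, if w ∈ W^J is semi-chainlike (covers exactly one element w' of W^J in Bruhat order) then w = s·w' for some s ∈ S, and moreover every reduced expression for w begins with this s. -/
/-!
If `s` is a left descent of `w ∈ W^J`, then `s w` again lies in `W^J` and is covered by `w`.
So when `w` covers only `w'`, every left descent `s` of `w` satisfies `s w = w'`, and a reduced
word for `w` begins with a left descent. That letter is then determined, because distinct letters
give distinct simple reflections: they act differently in the geometric representation on `ℝ^(B)`,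
whose Coxeter relations come down to zeros of Chebyshev polynomials at `2 cos (2π / m)`.
-/

open CoxeterSystem

namespace CoxPaper

variable {B : Type*} {M : CoxeterMatrix B} {W : Type*} [Group W]

/-- The Bruhat order on `W`, via the subword property. -/
def BruhatLE (cs : CoxeterSystem M W) (u w : W) : Prop :=
  ∃ ω : List B, cs.IsReduced ω ∧ cs.wordProd ω = w ∧
    ∃ υ : List B, υ.Sublist ω ∧ cs.wordProd υ = u

/-- The strict Bruhat order. -/
def BruhatLT (cs : CoxeterSystem M W) (u w : W) : Prop :=
  BruhatLE cs u w ∧ u ≠ w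

/-- The standard parabolic subgroup `W_J`. -/
def Parabolic (cs : CoxeterSystem M W) (J : Set B) : Subgroup W :=
  Subgroup.closure (cs.simple '' J)

/-- `w` is the minimal-length representative of its coset `w W_J`; the set of such
elements is `W^J`. -/
def MinRep (cs : CoxeterSystem M W) (J : Set B) (w : W) : Prop :=
  ∀ u : W, w⁻¹ * u ∈ Parabolic cs J → cs.length w ≤ cs.length u

/-- The covering relation `u ⋖ w` in the Bruhat order on `W^J`. -/
def Covers (cs : CoxeterSystem M W) (J : Set B) (u w : W) : Prop :=
  MinRep cs J u ∧ MinRep cs J w ∧ BruhatLT cs u w ∧ cs.length w = cs.length u + 1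

/-- `w ∈ W^J` is semi-chainlike if it covers exactly one element of `W^J`. -/
def SemiChainlike (cs : CoxeterSystem M W) (J : Set B) (w : W) : Prop :=
  MinRep cs J w ∧ ∃! u : W, Covers cs J u w

/-- `l` is a saturated chain of covering relations in `W^J` from the identity to `w`. -/
def IsChainTo (cs : CoxeterSystem M W) (J : Set B) (l : List W) (w : W) : Prop :=
  l.Chain' (Covers cs J) ∧ l.head? = some 1 ∧ l.getLast? = some w

/-- `w` is chainlike: there is a unique saturated chain of coverings `e ⋖ ⋯ ⋖ w` in `W^J`. -/
def Chainlike (cs : CoxeterSystem M W) (J : Set B) (w : W) : Prop :=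
  MinRep cs J w ∧ w ≠ 1 ∧ ∃! l : List W, IsChainTo cs J l w

/-- `m(s,t) ≥ 3`, where the entry `0` denotes `∞`. -/
def Big (M : CoxeterMatrix B) (s t : B) : Prop := M s t = 0 ∨ 3 ≤ M s t

/-- The word `l = [s_k, …, s_1, s_0]` is (the reduced expression of) a simple element
of `W^J`: the `sᵢ` are distinct, `s₀ ∈ S∖J`, `s₁, …, s_k ∈ J`, and `m(sᵢ,sⱼ) ≥ 3`
if and only if `|i - j| = 1`. -/
def Simple (cs : CoxeterSystem M W) (J : Set B) (l : List B) : Prop :=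
  l ≠ [] ∧ l.Nodup ∧
  (∀ i : Fin l.length, (i.val + 1 < l.length → l.get i ∈ J) ∧
    (i.val + 1 = l.length → l.get i ∉ J)) ∧
  (∀ i j : Fin l.length, Big M (l.get i) (l.get j) ↔
    (i.val + 1 = j.val ∨ j.val + 1 = i.val)) ∧
  MinRep cs J (cs.wordProd l)

/-- `L(u,v)`: the minimal length of an element of `W^J` above both `u` and `v`. -/
noncomputable def Lfun (cs : CoxeterSystem M W) (J : Set B) (u v : W) : ℕ :=
  sInf {n | ∃ w : W, MinRep cs J w ∧ BruhatLE cs u w ∧ BruhatLE cs v w ∧ cs.length w = n}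

/-- `X(u,v)`: the elements of `W^J` above both `u` and `v` of minimal length `L(u,v)`. -/
def Xset (cs : CoxeterSystem M W) (J : Set B) (u v : W) : Set W :=
  {w | MinRep cs J w ∧ BruhatLE cs u w ∧ BruhatLE cs v w ∧
    cs.length w = Lfun cs J u v}

/-- The sets `Mᵢ(u,v)`. -/
def Mset (cs : CoxeterSystem M W) (J : Set B) (u v : W) : ℕ → Set W
  | 0 => ∅
  | 1 => {u, v}
  | n + 2 => {w | MinRep cs J w ∧ ∀ z ∈ Mset cs J u v (n + 1), Covers cs J z w}

/-- `M(u,v) = min { i ≥ 2 : |Mᵢ(u,v)| = 1 }`, with value `∞` if there is no such `i`. -/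
noncomputable def Mval (cs : CoxeterSystem M W) (J : Set B) (u v : W) : ℕ∞ :=
  sInf {i : ℕ∞ | ∃ n : ℕ, i = n ∧ 2 ≤ n ∧ ∃ w : W, Mset cs J u v n = {w}}

/-- The Coxeter matrix entry `m(s,t)` as an extended natural number (`0` ↦ `∞`). -/
def entryE (M : CoxeterMatrix B) (s t : B) : ℕ∞ := if M s t = 0 then ⊤ else (M s t : ℕ∞)

/-! Concrete Coxeter matrices on `Fin n`. -/

/-- Symmetrization of a function of natural numbers. -/
def symmEntry (f : ℕ → ℕ → ℕ) (a b : ℕ) : ℕ := if a = b then 1 else f (min a b) (max a b)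

theorem symmEntry_comm (f : ℕ → ℕ → ℕ) (a b : ℕ) : symmEntry f a b = symmEntry f b a := by
  unfold symmEntry
  rcases eq_or_ne a b with rfl | h
  · simp
  · rw [if_neg h, if_neg h.symm, min_comm, max_comm]

/-- A Coxeter matrix on `Fin n` given by a function on pairs `a < b`. -/
def ofFun (n : ℕ) (f : ℕ → ℕ → ℕ) (hf : ∀ a b : ℕ, f a b ≠ 1) : CoxeterMatrix (Fin n) where
  M := Matrix.of fun i j => symmEntry f i.val j.val
  isSymm := by
    ext i j
    simpa only [Matrix.transpose_apply, Matrix.of_apply] using symmEntry_comm f j.val i.val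
  diagonal := by intro i; simp [symmEntry]
  off_diagonal := by
    intro i j hij
    have h : i.val ≠ j.val := fun h => hij (Fin.ext h)
    simp only [Matrix.of_apply, symmEntry, if_neg h]
    exact hf _ _

/-- The word `[k-1, k-2, …, 1, 0]` in `Fin n` (the descending product `s_k ⋯ s_2 s_1`,
with `sᵢ` corresponding to the index `i - 1`). -/
def descWord (n k : ℕ) : List (Fin n) :=
  (List.range k).reverse.filterMap fun i => if h : i < n then some ⟨i, h⟩ else none

end CoxPaper

open Real

namespace Polynomial.Chebyshev

theorem S_sub_one_eval_two_mul_cos_eq_zero {θ : ℝ} {n : ℤ} (hθ : sin θ ≠ 0)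
    (hnθ : n * θ = π) : (S ℝ (n - 1)).eval (2 * cos θ) = 0 := by
  have h := S_two_mul_real_cos θ (n - 1)
  rw [Int.cast_sub, Int.cast_one, sub_add_cancel, hnθ, sin_pi] at h
  exact (mul_eq_zero.mp h).resolve_right hθ

theorem S_add_S_sub_one_eval_two_mul_cos_eq_zero {θ : ℝ} {n : ℤ} (hθ : sin θ ≠ 0)
    (hnθ : (2 * n + 1) * θ = 2 * π) :
    (S ℝ n).eval (2 * cos θ) + (S ℝ (n - 1)).eval (2 * cos θ) = 0 := by
  have h := congrArg₂ (· + ·) (S_two_mul_real_cos θ n) (S_two_mul_real_cos θ (n - 1))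
  have h₁ : ((n : ℝ) + 1) * θ = π + θ / 2 := by linear_combination hnθ / 2
  have h₂ : (((n - 1 : ℤ) : ℝ) + 1) * θ = π - θ / 2 := by push_cast; linear_combination hnθ / 2
  simp only [h₁, h₂, sin_pi_sub, sin_add, sin_pi, cos_pi] at h
  exact (mul_eq_zero.mp (by linear_combination h)).resolve_right hθ

end Polynomial.Chebyshev

theorem Real.sin_two_pi_div_ne_zero {m : ℕ} (hm : 3 ≤ m) : sin (2 * π / m) ≠ 0 := by
  have hm' : (3 : ℝ) ≤ m := by exact_mod_cast hm
  refine (sin_pos_of_pos_of_lt_pi (by positivity) ?_).ne'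
  rw [div_lt_iff₀ (by positivity)]
  nlinarith [pi_pos]

open Polynomial.Chebyshev in
theorem Module.reflection_mul_reflection_pow_eq_one {V : Type*} [AddCommGroup V] [Module ℝ V]
    {x y : V} {f g : Module.Dual ℝ V} (hf : f x = 2) (hg : g y = 2) {m : ℕ} (hm : 2 ≤ m)
    (hfy : f y = -2 * cos (π / m)) (hgx : g x = -2 * cos (π / m)) :
    (reflection hf * reflection hg) ^ m = 1 := by
  rcases hm.eq_or_lt with rfl | hm
  · rw [Nat.cast_ofNat, cos_pi_div_two, mul_zero] at hfy hgx
    ext z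
    rw [reflection_mul_reflection_pow_apply hf hg 2 z (-2) (by simp [hfy, hgx])]
    norm_num only [hfy, hgx, S_zero, S_neg_one, S_one, Polynomial.eval_one, Polynomial.eval_zero,
      Polynomial.eval_X, LinearEquiv.coe_one, id_eq]
    module
  apply LinearEquiv.toLinearMap_injective
  rw [reflection_mul_reflection_pow _ _ m (2 * cos (2 * π / m))
    (by rw [hfy, hgx, mul_div_assoc, cos_two_mul]; ring)]
  -- Both Chebyshev coefficients of the formula vanish, as `S k (2 cos θ) sin θ = sin ((k+1) θ)`.
  have hθ := sin_two_pi_div_ne_zero hm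
  obtain ⟨n, rfl | rfl⟩ := Nat.even_or_odd' m
  · have hn : (n : ℝ) ≠ 0 := by norm_cast; omega
    have hS := S_sub_one_eval_two_mul_cos_eq_zero (n := n) hθ (by push_cast; field_simp)
    rw [show ((2 * n : ℕ) - 2 : ℤ) / 2 = n - 1 by omega,
      show ((2 * n : ℕ) - 1 : ℤ) / 2 = n - 1 by omega, hS]
    simp
  · have hS := S_add_S_sub_one_eval_two_mul_cos_eq_zero (n := n) hθ (by push_cast; field_simp)
    rw [show ((2 * n + 1 : ℕ) - 1 : ℤ) / 2 = n by omega,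
      show ((2 * n + 1 : ℕ) - 3 : ℤ) / 2 = n - 1 by omega,
      show ((2 * n + 1 : ℕ) : ℤ) / 2 = n by omega,
      show ((2 * n + 1 : ℕ) - 2 : ℤ) / 2 = n - 1 by omega, hS]
    simp

namespace CoxeterMatrix

variable {B : Type*} (M : CoxeterMatrix B)

/-- The matrix `-cos (π / m(a,b))` of the Tits bilinear form (`m = 0` stands for `∞`). -/
noncomputable def cosineForm (a b : B) : ℝ := if M a b = 0 then -1 else -cos (π / M a b)

theorem cosineForm_self (a : B) : M.cosineForm a a = 1 := by
  simp [cosineForm]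

noncomputable def geomCoroot (a : B) : Module.Dual ℝ (B →₀ ℝ) :=
  2 • Finsupp.linearCombination ℝ (M.cosineForm a)

theorem geomCoroot_single (a b : B) :
    M.geomCoroot a (Finsupp.single b 1) = 2 * M.cosineForm a b := by
  simp [geomCoroot]

theorem geomCoroot_single_self (a : B) : M.geomCoroot a (Finsupp.single a 1) = 2 := by
  simp [geomCoroot_single, cosineForm_self]

theorem geomCoroot_single_of_ne_zero {a b : B} (h : M a b ≠ 0) :
    M.geomCoroot a (Finsupp.single b 1) = -2 * cos (π / M a b) := by
  simp [geomCoroot_single, cosineForm, h]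

noncomputable def geomReflection (a : B) : (B →₀ ℝ) ≃ₗ[ℝ] (B →₀ ℝ) :=
  Module.reflection (M.geomCoroot_single_self a)

theorem isLiftable_geomReflection : M.IsLiftable M.geomReflection := by
  intro a b
  rcases eq_or_ne a b with rfl | hab
  · rw [M.diagonal, pow_one, mul_eq_one_iff_eq_inv, geomReflection, Module.reflection_inv]
  obtain h0 | hm : M a b = 0 ∨ 2 ≤ M a b := by have := M.off_diagonal a b hab; omega
  · rw [h0, pow_zero]
  refine Module.reflection_mul_reflection_pow_eq_one _ _ hm
    (M.geomCoroot_single_of_ne_zero (by omega)) ?_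
  rw [M.geomCoroot_single_of_ne_zero (by rw [M.symmetric]; omega), M.symmetric]

end CoxeterMatrix

namespace CoxeterSystem

variable {B : Type*} {M : CoxeterMatrix B} {W : Type*} [Group W] (cs : CoxeterSystem M W)

theorem simple_injective : Function.Injective cs.simple := by
  intro a b hab
  by_contra hne
  have hρ : M.geomReflection a = M.geomReflection b := by
    rw [← cs.lift_apply_simple M.isLiftable_geomReflection a, hab, cs.lift_apply_simple]
  have := congrArg (fun σ => σ (Finsupp.single a 1) a) hρ
  norm_num [CoxeterMatrix.geomReflection, Module.reflection_apply, hne] at this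

theorem isLeftDescent_of_isReduced_cons {i : B} {ω : List B} (hω : cs.IsReduced (i :: ω)) :
    cs.IsLeftDescent (cs.wordProd (i :: ω)) i := by
  rw [IsLeftDescent, hω.eq, wordProd_cons, simple_mul_simple_cancel_left]
  exact (cs.length_wordProd_le ω).trans_lt (List.length_cons ▸ Nat.lt_succ_self _)

end CoxeterSystem

namespace CoxPaper

variable {B : Type*} {M : CoxeterMatrix B} {W : Type*} [Group W] {cs : CoxeterSystem M W}
  {J : Set B} {w : W} {i : B}

theorem bruhatLE_simple_mul_of_isLeftDescent (hi : cs.IsLeftDescent w i) :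
    BruhatLE cs (cs.simple i * w) w := by
  obtain ⟨ω, hω, hωw⟩ := cs.exists_isReduced (cs.simple i * w)
  have hprod : cs.wordProd (i :: ω) = w := by
    rw [cs.wordProd_cons, ← hωw, simple_mul_simple_cancel_left]
  have hred : cs.IsReduced (i :: ω) := by
    rw [CoxeterSystem.IsReduced, hprod, List.length_cons, ← hω.eq, ← hωw]
    exact (cs.isLeftDescent_iff.mp hi).symm
  exact ⟨i :: ω, hred, hprod, ω, List.sublist_cons_self i ω, hωw.symm⟩

theorem MinRep.simple_mul_of_isLeftDescent (hw : MinRep cs J w) (hi : cs.IsLeftDescent w i) :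
    MinRep cs J (cs.simple i * w) := by
  intro u hu
  have hsu : w⁻¹ * (cs.simple i * u) ∈ Parabolic cs J := by
    simpa [mul_assoc] using hu
  have hmin := hw _ hsu
  have hlen_su := cs.length_simple_mul u i
  have hdesc := cs.isLeftDescent_iff.mp hi
  omega

theorem covers_simple_mul_of_isLeftDescent (hw : MinRep cs J w) (hi : cs.IsLeftDescent w i) :
    Covers cs J (cs.simple i * w) w := by
  have hlen := cs.isLeftDescent_iff.mp hi
  refine ⟨hw.simple_mul_of_isLeftDescent hi, hw,
    ⟨bruhatLE_simple_mul_of_isLeftDescent hi, fun h => ?_⟩, hlen.symm⟩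
  rw [h] at hlen
  omega

/-- if `w ∈ W^J` is semi-chainlike, covering exactly the element `w'`,
then `w = s·w'` for some `s ∈ S`, and every reduced expression for `w` begins with `s`. -/
theorem statement_3 (cs : CoxeterSystem M W) (J : Set B) (w w' : W)
    (hw : MinRep cs J w) (hcov : Covers cs J w' w)
    (huniq : ∀ u : W, Covers cs J u w → u = w') :
    ∃ s : B, w = cs.simple s * w' ∧
      ∀ ω : List B, cs.IsReduced ω → cs.wordProd ω = w → ω.head? = some s := by
  have hdesc : ∀ i, cs.IsLeftDescent w i → cs.simple i * w = w' := fun i hi =>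
    huniq _ (covers_simple_mul_of_isLeftDescent hw hi)
  have hw1 : w ≠ 1 := by
    rintro rfl
    simpa using hcov.2.2.2
  obtain ⟨s, hs⟩ := cs.exists_leftDescent_of_ne_one hw1
  refine ⟨s, by rw [← hdesc s hs, simple_mul_simple_cancel_left], ?_⟩
  rintro (_ | ⟨t, ω⟩) hred hω
  · exact absurd (hω.symm.trans cs.wordProd_nil) hw1
  · have ht := hdesc t (hω ▸ cs.isLeftDescent_of_isReduced_cons hred)
    exact congrArg some (cs.simple_injective (mul_right_cancel (ht.trans (hdesc s hs).symm)))

end CoxPaper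
end

section
/- In a Coxeter system (W,S) with J ⊆ S, every chainlike element of W^J has a unique reduced expression. -/
open CoxeterSystem

namespace CoxPaper

variable {B : Type*} {M : CoxeterMatrix B} {W : Type*} [Group W]

/-! The reduced words of `w ∈ W^J` embed into the saturated chains from `e` to `w` in `W^J`:
the suffix products `e, π(aₙ), π(aₙ₋₁aₙ), …, π(a₁⋯aₙ) = w` of a reduced word `a₁⋯aₙ` are
minimal coset representatives whose lengths go up by one, so they form such a chain, and the
chain determines the word because distinct generators give distinct simple reflections. The
latter is seen in the Tits reflection representation on `B →₀ ℂ`, where the Coxeter relation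
for `m = m(k,l) ≥ 2` holds because `σₖσₗ` has the primitive `m`-th roots of unity `e^{±2πi/m}` as
eigenvalues on `span {eₖ, eₗ}` and acts trivially modulo that span. -/

lemma sum_range_pow_apply_eq_zero {K V : Type*} [Field K] [AddCommGroup V] [Module K V]
    {T : Module.End K V} {μ : K} {x : V} (hx : T x = μ • x) {m : ℕ} (hμ : μ ^ m = 1)
    (hμ1 : μ ≠ 1) : (∑ r ∈ Finset.range m, T ^ r) x = 0 := by
  have hpow : ∀ r : ℕ, (T ^ r) x = μ ^ r • x := by
    intro r
    induction r with
    | zero => simp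
    | succ r ih => rw [pow_succ', Module.End.mul_apply, ih, map_smul, hx, smul_smul, ← pow_succ]
  rw [LinearMap.sum_apply]
  simp only [hpow, ← Finset.sum_smul, geom_sum_eq hμ1, hμ, sub_self, zero_div, zero_smul]

noncomputable section TitsRepresentation

open Complex in
def titsCoeff (m : ℕ) : ℂ := -cos (Real.pi / m)

variable (M) in
def titsForm (k : B) : (B →₀ ℂ) →ₗ[ℂ] ℂ :=
  Finsupp.linearCombination ℂ fun l => titsCoeff (M l k)

variable (M) in
def titsRefl (k : B) : Module.End ℂ (B →₀ ℂ) :=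
  LinearMap.id -
    LinearMap.toSpanSingleton ℂ _ (Finsupp.single k (1 : ℂ)) ∘ₗ ((2 : ℂ) • titsForm M k)

lemma titsCoeff_one : titsCoeff 1 = 1 := by
  simp [titsCoeff, Complex.cos_pi]

lemma titsForm_single (k l : B) : titsForm M k (Finsupp.single l 1) = titsCoeff (M l k) := by
  simp [titsForm]

lemma titsRefl_apply (k : B) (v : B →₀ ℂ) :
    titsRefl M k v = v - (2 * titsForm M k v) • Finsupp.single k 1 := by
  simp [titsRefl]

lemma titsRefl_single (k l : B) :
    titsRefl M k (Finsupp.single l 1) =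
      Finsupp.single l 1 - (2 * titsCoeff (M l k)) • Finsupp.single k 1 := by
  rw [titsRefl_apply, titsForm_single]

lemma titsRefl_single_self (k : B) : titsRefl M k (Finsupp.single k 1) = -Finsupp.single k 1 := by
  rw [titsRefl_single, M.diagonal, titsCoeff_one]
  module

lemma titsRefl_mul_self (k : B) : titsRefl M k * titsRefl M k = 1 := by
  refine LinearMap.ext fun v => ?_
  have hform : titsForm M k (titsRefl M k v) = -titsForm M k v := by
    rw [titsRefl_apply, map_sub, map_smul, titsForm_single, M.diagonal, titsCoeff_one]
    simp only [smul_eq_mul]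
    ring
  rw [Module.End.mul_apply, titsRefl_apply _ (titsRefl M k v), hform, titsRefl_apply]
  simp only [Module.End.one_apply]
  module

lemma titsRefl_mul_titsRefl_apply_eigen (k l : B) {z : ℂ} (hz : z ≠ 0)
    (hc : 2 * titsCoeff (M k l) = -(z + z⁻¹)) :
    (titsRefl M k * titsRefl M l) (Finsupp.single k 1 + z⁻¹ • Finsupp.single l 1) =
      z ^ 2 • (Finsupp.single k 1 + z⁻¹ • Finsupp.single l 1) := by
  have hc' : 2 * titsCoeff (M l k) = -(z + z⁻¹) := by rwa [M.symmetric]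
  rw [Module.End.mul_apply, map_add, map_smul, titsRefl_single_self, titsRefl_single, hc]
  simp only [map_add, map_sub, map_smul, map_neg, titsRefl_single_self, titsRefl_single k l, hc']
  match_scalars <;> field_simp <;> ring

lemma titsRefl_mul_titsRefl_apply_sub_self (k l : B) (v : B →₀ ℂ) :
    (titsRefl M k * titsRefl M l) v - v =
      (-(2 * titsForm M k (titsRefl M l v))) • Finsupp.single k 1 +
        (-(2 * titsForm M l v)) • Finsupp.single l 1 := by
  rw [Module.End.mul_apply, titsRefl_apply k, titsRefl_apply l]
  module

lemma titsRefl_mul_titsRefl_pow (k l : B) (hm : 2 ≤ M k l) :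
    (titsRefl M k * titsRefl M l) ^ M k l = 1 := by
  set m := M k l
  set T := titsRefl M k * titsRefl M l
  set S := ∑ r ∈ Finset.range m, T ^ r
  set ζ := Complex.exp (Real.pi / m * Complex.I)
  have hζ : ζ ≠ 0 := Complex.exp_ne_zero _
  have hq : IsPrimitiveRoot (ζ ^ 2) m := by
    convert Complex.isPrimitiveRoot_exp m (by omega) using 1
    rw [← Complex.exp_nat_mul]
    congr 1
    push_cast
    ring
  have hq' : IsPrimitiveRoot (ζ⁻¹ ^ 2) m := by simpa only [inv_pow] using hq.inv
  have hc : 2 * titsCoeff m = -(ζ + ζ⁻¹) := by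
    rw [titsCoeff, mul_neg, Complex.two_cos, ← Complex.exp_neg, neg_mul]
  have hc' : 2 * titsCoeff m = -(ζ⁻¹ + ζ⁻¹⁻¹) := by rw [inv_inv, hc, add_comm]
  have hplus := sum_range_pow_apply_eq_zero (titsRefl_mul_titsRefl_apply_eigen k l hζ hc)
    hq.pow_eq_one (hq.ne_one (by omega))
  have hminus := sum_range_pow_apply_eq_zero
    (titsRefl_mul_titsRefl_apply_eigen k l (inv_ne_zero hζ) hc') hq'.pow_eq_one
    (hq'.ne_one (by omega))
  have hsub : ζ - ζ⁻¹ ≠ 0 := by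
    intro h
    apply hq.ne_one (by omega)
    field_simp at h
    linear_combination h
  have hSl : S (Finsupp.single l 1) = 0 := by
    have hel : Finsupp.single l (1 : ℂ) = (ζ - ζ⁻¹)⁻¹ •
        ((Finsupp.single k 1 + ζ⁻¹⁻¹ • Finsupp.single l 1) -
          (Finsupp.single k 1 + ζ⁻¹ • Finsupp.single l 1)) := by
      rw [inv_inv]
      match_scalars <;> simp [hsub]
    rw [hel, map_smul, map_sub, hplus, hminus, sub_zero, smul_zero]
  have hSk : S (Finsupp.single k 1) = 0 := by
    have hek : Finsupp.single k (1 : ℂ) =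
        (Finsupp.single k 1 + ζ⁻¹ • Finsupp.single l 1) - ζ⁻¹ • Finsupp.single l 1 := by
      abel
    rw [hek, map_sub, map_smul, hplus, hSl, smul_zero, sub_zero]
  have hST : S * (T - 1) = 0 := LinearMap.ext fun v => by
    rw [Module.End.mul_apply, LinearMap.sub_apply, Module.End.one_apply,
      titsRefl_mul_titsRefl_apply_sub_self, map_add, map_smul, map_smul, hSk, hSl,
      smul_zero, smul_zero, add_zero, LinearMap.zero_apply]
  exact sub_eq_zero.mp ((geom_sum_mul T m).symm.trans hST)

lemma isLiftable_titsRefl : M.IsLiftable (titsRefl M) := by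
  intro k l
  rcases eq_or_ne k l with rfl | hkl
  · rw [M.diagonal, pow_one, titsRefl_mul_self]
  rcases Nat.lt_or_ge (M k l) 2 with hlt | hge
  · have h0 : M k l = 0 := by have := M.off_diagonal k l hkl; omega
    rw [h0, pow_zero]
  · exact titsRefl_mul_titsRefl_pow k l hge

end TitsRepresentation

lemma simple_injective (cs : CoxeterSystem M W) : Function.Injective cs.simple := by
  intro i j hij
  by_contra hne
  have hrefl : titsRefl M i = titsRefl M j := by
    simpa only [cs.lift_apply_simple] using
      congrArg (cs.lift ⟨titsRefl M, isLiftable_titsRefl⟩) hij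
  -- The `i`-th coordinate of `single i 1` is negated by `titsRefl M i` but kept by `titsRefl M j`.
  have hcoord := DFunLike.congr_fun (LinearMap.congr_fun hrefl (Finsupp.single i 1)) i
  norm_num [titsRefl_single_self, titsRefl_single, Ne.symm hne] at hcoord

section Chains

variable {cs : CoxeterSystem M W} {J : Set B}

lemma MinRep.of_mul {u v : W} (h : MinRep cs J (u * v))
    (hl : cs.length (u * v) = cs.length u + cs.length v) : MinRep cs J v := by
  intro x hx
  have h₁ := h (u * x) (by rwa [mul_inv_rev, mul_assoc, inv_mul_cancel_left])
  have h₂ := cs.length_mul_le u x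
  omega

lemma length_wordProd_cons {a : B} {ω : List B} (hred : cs.IsReduced (a :: ω)) :
    cs.length (cs.wordProd (a :: ω)) = cs.length (cs.simple a) + cs.length (cs.wordProd ω) := by
  have hω : cs.IsReduced ω := hred.drop 1
  rw [hred.eq, cs.length_simple, hω.eq, List.length_cons, add_comm]

lemma covers_wordProd_cons {a : B} {ω : List B} (hred : cs.IsReduced (a :: ω))
    (hmin : MinRep cs J (cs.wordProd (a :: ω))) :
    Covers cs J (cs.wordProd ω) (cs.wordProd (a :: ω)) := by
  have hlen := length_wordProd_cons hred
  refine ⟨?_, hmin,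
    ⟨⟨a :: ω, hred, rfl, ω, List.sublist_cons_self a ω, rfl⟩, fun h => ?_⟩, ?_⟩
  · rw [cs.wordProd_cons] at hmin hlen
    exact hmin.of_mul hlen
  · rw [h, cs.length_simple] at hlen
    omega
  · rw [hlen, cs.length_simple, add_comm]

theorem _root_.List.head?_tails {α : Type*} (l : List α) : l.tails.head? = some l := by
  cases l <;> rfl

theorem _root_.List.getLast?_tails {α : Type*} (l : List α) : l.tails.getLast? = some [] := by
  induction l with
  | nil => rfl
  | cons a l ih => simp [List.getLast?_cons, ih]

variable (cs) in
def suffixChain (ω : List B) : List W := (ω.tails.map cs.wordProd).reverse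

lemma isChain_map_wordProd_tails {ω : List B} (hred : cs.IsReduced ω)
    (hmin : MinRep cs J (cs.wordProd ω)) :
    (ω.tails.map cs.wordProd).IsChain (fun u w => Covers cs J w u) := by
  induction ω with
  | nil => simp
  | cons a ω ih =>
    have hcov := covers_wordProd_cons hred hmin
    rw [List.tails_cons, List.map_cons, List.isChain_cons]
    refine ⟨?_, ih (hred.drop 1) hcov.1⟩
    simpa [List.head?_map, List.head?_tails] using hcov

lemma isChainTo_suffixChain {ω : List B} (hred : cs.IsReduced ω)
    (hmin : MinRep cs J (cs.wordProd ω)) :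
    IsChainTo cs J (suffixChain cs ω) (cs.wordProd ω) := by
  refine ⟨List.isChain_reverse.mpr (isChain_map_wordProd_tails hred hmin), ?_, ?_⟩
  · rw [suffixChain, List.head?_reverse, List.getLast?_map, List.getLast?_tails,
      Option.map_some, cs.wordProd_nil]
  · rw [suffixChain, List.getLast?_reverse, List.head?_map, List.head?_tails, Option.map_some]

variable (cs) in
lemma suffixChain_injective : Function.Injective (suffixChain cs) := by
  intro ω ω' h
  replace h := List.reverse_injective h
  have hlen : ω.length = ω'.length := by
    simpa using congrArg List.length h
  induction ω generalizing ω' with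
  | nil => exact (List.length_eq_zero_iff.mp hlen.symm).symm
  | cons a ω ih =>
    obtain _ | ⟨b, ω'⟩ := ω'
    · simp at hlen
    rw [List.tails_cons, List.tails_cons, List.map_cons, List.map_cons] at h
    obtain ⟨hhead, htail⟩ := List.cons.inj h
    obtain rfl := ih htail (by simpa using hlen)
    rw [cs.wordProd_cons, cs.wordProd_cons] at hhead
    rw [simple_injective cs (mul_right_cancel hhead)]

end Chains

/-- every chainlike element of `W^J` has a unique reduced expression. -/
theorem statement_4 (cs : CoxeterSystem M W) (J : Set B) (w : W)
    (hw : Chainlike cs J w) :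
    ∃! ω : List B, cs.IsReduced ω ∧ cs.wordProd ω = w := by
  obtain ⟨hmin, -, l, -, hl⟩ := hw
  obtain ⟨ω, hred, rfl⟩ := cs.exists_isReduced w
  refine ⟨ω, ⟨hred, rfl⟩, fun ω' ⟨hred', hprod⟩ => suffixChain_injective cs ?_⟩
  have hchain' := isChainTo_suffixChain (J := J) hred' (hprod ▸ hmin)
  rw [hprod] at hchain'
  exact (hl _ hchain').trans (hl _ (isChainTo_suffixChain hred hmin)).symm

end CoxPaper
end

section
/- Let (W,S) be a Coxeter system and J ⊆ S, and suppose the Coxeter graph of (W,S) decomposes into connected components S = S₁ ⊔ ⋯ ⊔ Sₙ. For each i, the subposet Wᴶᵢ = {w ∈ W^J : every generator s ∈ S∖J with s ≤ w lies in Sᵢ} of W^J is order-isomorphic to the quotient poset (W_{Sᵢ})^{Sᵢ ∩ J} with the Bruhat order. -/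
/-!
When no edge of the Coxeter graph joins `S₁` to its complement, the simple reflections
outside `S₁` commute with `W_{S₁}`, so the inclusion `incl : W_{S₁} → W` has a retraction
`proj : W → W_{S₁}` killing them. Comparing lengths through `proj` shows that `incl` preserves
length, that reduced words of elements of its image only use letters of `S₁`, and hence that
`incl` is an embedding for the Bruhat order. An element `w ∈ W^J` whose letters outside `J` lie
in `S₁` lies in `incl (proj w) · W_J`, by moving the letters of `J ∖ S₁` to the right; so
minimality gives `ℓ(w) ≤ ℓ(proj w)`, which is at most the number of letters of a reduced word
of `w` in `S₁`. Hence all of them are in `S₁` and `w = incl (proj w)`.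
-/

open CoxeterSystem

namespace CoxPaper

variable {B : Type*} {M : CoxeterMatrix B} {W : Type*} [Group W]

/-- The restriction of a Coxeter matrix to a subset of the generators. -/
def restrictMatrix (M : CoxeterMatrix B) (S₁ : Set B) : CoxeterMatrix S₁ where
  M := Matrix.of fun a b => M a.val b.val
  isSymm := by
    ext a b
    simpa only [Matrix.transpose_apply, Matrix.of_apply] using M.isSymm.apply a.val b.val
  diagonal := fun a => M.diagonal a.val
  off_diagonal := fun a b h => M.off_diagonal a.val b.val fun hv => h (Subtype.ext hv)

def IsUnionOfComponents (M : CoxeterMatrix B) (S₁ : Set B) : Prop :=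
  ∀ s ∈ S₁, ∀ t : B, t ∉ S₁ → M s t = 2

/-- `W_{S₁}` is modelled as the abstract Coxeter group of the restricted matrix. -/
abbrev restrictSystem (M : CoxeterMatrix B) (S₁ : Set B) :
    CoxeterSystem (restrictMatrix M S₁) (restrictMatrix M S₁).Group :=
  (restrictMatrix M S₁).toCoxeterSystem

theorem commute_simple_of_eq_two (cs : CoxeterSystem M W) {i j : B} (h : M i j = 2) :
    Commute (cs.simple i) (cs.simple j) := by
  have h₁ := cs.simple_mul_simple_pow i j
  rw [h, sq, mul_eq_one_iff_eq_inv, mul_inv_rev, cs.inv_simple, cs.inv_simple] at h₁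
  exact h₁

section Restriction

variable (cs : CoxeterSystem M W) (S₁ : Set B)

open Classical in
noncomputable def toSub (s : B) : Option S₁ :=
  if h : s ∈ S₁ then some ⟨s, h⟩ else none

theorem toSub_of_mem {s : B} (h : s ∈ S₁) : toSub S₁ s = some ⟨s, h⟩ := dif_pos h

theorem toSub_of_notMem {s : B} (h : s ∉ S₁) : toSub S₁ s = none := dif_neg h

noncomputable def incl : (restrictMatrix M S₁).Group →* W :=
  (restrictSystem M S₁).lift
    ⟨fun a : S₁ => cs.simple a.val, fun a b => cs.simple_mul_simple_pow a.val b.val⟩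

theorem incl_simple (a : S₁) : incl cs S₁ ((restrictSystem M S₁).simple a) = cs.simple a :=
  (restrictSystem M S₁).lift_apply_simple _ a

theorem incl_wordProd (ω : List S₁) :
    incl cs S₁ ((restrictSystem M S₁).wordProd ω) = cs.wordProd (ω.map Subtype.val) := by
  induction ω with
  | nil => simp
  | cons a ω ih => rw [wordProd_cons, map_mul, incl_simple, ih, List.map_cons, wordProd_cons]

theorem incl_mem_parabolic {J : Set B} {x : (restrictMatrix M S₁).Group}
    (h : x ∈ Parabolic (restrictSystem M S₁) {a | a.val ∈ J}) :
    incl cs S₁ x ∈ Parabolic cs J := by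
  refine (Subgroup.closure_le (K := (Parabolic cs J).comap (incl cs S₁))).mpr ?_ h
  rintro _ ⟨a, ha, rfl⟩
  simp only [SetLike.mem_coe, Subgroup.mem_comap, incl_simple]
  exact Subgroup.subset_closure ⟨a.val, ha, rfl⟩

variable {S₁} (hS : IsUnionOfComponents M S₁)

open Classical in
/-- The retraction `W → W_{S₁}` killing the simple reflections outside `S₁`; it is well
defined because these commute with those of `S₁`. -/
noncomputable def proj : W →* (restrictMatrix M S₁).Group :=
  cs.lift ⟨fun s => if h : s ∈ S₁ then (restrictSystem M S₁).simple ⟨s, h⟩ else 1, by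
    intro i j
    by_cases hi : i ∈ S₁ <;> by_cases hj : j ∈ S₁ <;>
      simp only [hi, hj, dite_true, dite_false]
    · exact (restrictSystem M S₁).simple_mul_simple_pow ⟨i, hi⟩ ⟨j, hj⟩
    · rw [mul_one, hS i hi j hj, simple_sq]
    · rw [one_mul, M.symmetric i j, hS j hj i hi, simple_sq]
    · rw [mul_one, one_pow]⟩

theorem proj_simple_of_mem {s : B} (h : s ∈ S₁) :
    proj cs hS (cs.simple s) = (restrictSystem M S₁).simple ⟨s, h⟩ :=
  (cs.lift_apply_simple _ s).trans (dif_pos h)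

theorem proj_simple_of_notMem {s : B} (h : s ∉ S₁) : proj cs hS (cs.simple s) = 1 :=
  (cs.lift_apply_simple _ s).trans (dif_neg h)

theorem proj_wordProd (ω : List B) :
    proj cs hS (cs.wordProd ω) = (restrictSystem M S₁).wordProd (ω.filterMap (toSub S₁)) := by
  induction ω with
  | nil => simp
  | cons a ω ih =>
    rw [wordProd_cons, map_mul, ih]
    by_cases ha : a ∈ S₁
    · rw [proj_simple_of_mem cs hS ha, List.filterMap_cons_some (toSub_of_mem S₁ ha),
        wordProd_cons]
    · rw [proj_simple_of_notMem cs hS ha, one_mul,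
        List.filterMap_cons_none (toSub_of_notMem S₁ ha)]

theorem proj_incl (g : (restrictMatrix M S₁).Group) : proj cs hS (incl cs S₁ g) = g := by
  have h : (proj cs hS).comp (incl cs S₁) = MonoidHom.id _ :=
    (restrictSystem M S₁).ext_simple fun a => by
      rw [MonoidHom.comp_apply, incl_simple, proj_simple_of_mem cs hS a.2, MonoidHom.id_apply]
  exact DFunLike.congr_fun h g

include hS in
theorem incl_injective : Function.Injective (incl cs S₁) :=
  Function.LeftInverse.injective (proj_incl cs hS)

theorem length_proj_le (w : W) : (restrictSystem M S₁).length (proj cs hS w) ≤ cs.length w := by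
  obtain ⟨ω, hω, rfl⟩ := cs.exists_isReduced w
  rw [proj_wordProd, hω]
  exact ((restrictSystem M S₁).length_wordProd_le _).trans (List.length_filterMap_le _ _)

include hS in
theorem length_incl (g : (restrictMatrix M S₁).Group) :
    cs.length (incl cs S₁ g) = (restrictSystem M S₁).length g := by
  refine le_antisymm ?_ ?_
  · obtain ⟨ω, hω, rfl⟩ := (restrictSystem M S₁).exists_isReduced g
    rw [incl_wordProd, hω, ← List.length_map Subtype.val]
    exact cs.length_wordProd_le _
  · simpa only [proj_incl] using length_proj_le cs hS (incl cs S₁ g)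

include hS in
theorem isReduced_map_val_iff (ω : List S₁) :
    cs.IsReduced (ω.map Subtype.val) ↔ (restrictSystem M S₁).IsReduced ω := by
  rw [CoxeterSystem.IsReduced, CoxeterSystem.IsReduced, ← incl_wordProd, length_incl cs hS,
    List.length_map]

theorem forall_mem_of_length_le_length_proj (ω : List B)
    (h : ω.length ≤ (restrictSystem M S₁).length (proj cs hS (cs.wordProd ω))) :
    ∀ s ∈ ω, s ∈ S₁ := by
  have hlen : (ω.filterMap (toSub S₁)).length = ω.length := by
    refine le_antisymm (List.length_filterMap_le _ _) (h.trans ?_)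
    rw [proj_wordProd]
    exact (restrictSystem M S₁).length_wordProd_le _
  intro s hs
  by_contra hns
  simpa [toSub_of_notMem S₁ hns] using List.filterMap_length_eq_length.mp hlen s hs

include hS in
theorem exists_of_bruhatLE_incl {u : W} {g : (restrictMatrix M S₁).Group}
    (h : BruhatLE cs u (incl cs S₁ g)) :
    ∃ u', incl cs S₁ u' = u ∧ BruhatLE (restrictSystem M S₁) u' g := by
  obtain ⟨ω, hred, hω, υ, hsub, rfl⟩ := h
  have hmem : ∀ s ∈ ω, s ∈ S₁ := by
    refine forall_mem_of_length_le_length_proj cs hS ω ?_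
    rw [hω, proj_incl, ← length_incl cs hS, ← hω, hred]
  lift ω to List S₁ using hmem
  obtain ⟨υ', hsub', rfl⟩ := List.sublist_map_iff.mp hsub
  refine ⟨(restrictSystem M S₁).wordProd υ', incl_wordProd cs S₁ υ',
    ω, (isReduced_map_val_iff cs hS ω).mp hred, ?_, υ', hsub', rfl⟩
  exact incl_injective cs hS (by rw [incl_wordProd, hω])

include hS in
theorem bruhatLE_incl_iff (u g : (restrictMatrix M S₁).Group) :
    BruhatLE cs (incl cs S₁ u) (incl cs S₁ g) ↔ BruhatLE (restrictSystem M S₁) u g := by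
  refine ⟨fun h => ?_, ?_⟩
  · obtain ⟨u', hu', h'⟩ := exists_of_bruhatLE_incl cs hS h
    rwa [← incl_injective cs hS hu']
  · rintro ⟨ω, hred, rfl, υ, hsub, rfl⟩
    exact ⟨ω.map Subtype.val, (isReduced_map_val_iff cs hS ω).mpr hred,
      (incl_wordProd cs S₁ ω).symm, υ.map Subtype.val, hsub.map _,
      (incl_wordProd cs S₁ υ).symm⟩

include hS in
theorem mem_of_simple_bruhatLE_incl {s : B} {g : (restrictMatrix M S₁).Group}
    (h : BruhatLE cs (cs.simple s) (incl cs S₁ g)) : s ∈ S₁ := by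
  obtain ⟨u, hu, -⟩ := exists_of_bruhatLE_incl cs hS h
  by_contra hs
  have hu1 : u = 1 := by rw [← proj_incl cs hS u, hu, proj_simple_of_notMem cs hS hs]
  have := cs.length_simple s
  rw [← hu, hu1, map_one, length_one] at this
  exact zero_ne_one this

theorem proj_mem_parabolic {J : Set B} {w : W} (h : w ∈ Parabolic cs J) :
    proj cs hS w ∈ Parabolic (restrictSystem M S₁) {a | a.val ∈ J} := by
  refine (Subgroup.closure_le (K := (Parabolic _ _).comap (proj cs hS))).mpr ?_ h
  rintro _ ⟨s, hs, rfl⟩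
  by_cases h₁ : s ∈ S₁
  · simp only [SetLike.mem_coe, Subgroup.mem_comap, proj_simple_of_mem cs hS h₁]
    exact Subgroup.subset_closure ⟨⟨s, h₁⟩, hs, rfl⟩
  · simp only [SetLike.mem_coe, Subgroup.mem_comap, proj_simple_of_notMem cs hS h₁, one_mem]

include hS in
theorem commute_simple_incl {s : B} (hs : s ∉ S₁) (g : (restrictMatrix M S₁).Group) :
    Commute (cs.simple s) (incl cs S₁ g) := by
  obtain ⟨ω, -, rfl⟩ := (restrictSystem M S₁).exists_isReduced g
  rw [incl_wordProd]
  refine Commute.list_prod_right _ _ fun x hx => ?_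
  simp only [List.map_map, List.mem_map, Function.comp_apply] at hx
  obtain ⟨a, -, rfl⟩ := hx
  exact (commute_simple_of_eq_two cs (hS a a.2 s hs)).symm

/-- Letters of `J` outside `S₁` commute with the image of `incl`, so they can all be moved
to the right. -/
theorem wordProd_inv_mul_incl_proj_mem {J : Set B} (ω : List B)
    (h : ∀ s ∈ ω, s ∈ S₁ ∨ s ∈ J) :
    (cs.wordProd ω)⁻¹ * incl cs S₁ (proj cs hS (cs.wordProd ω)) ∈ Parabolic cs J := by
  induction ω with
  | nil => simp [one_mem]
  | cons a ω ih =>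
    have hω := ih fun s hs => h s (List.mem_cons_of_mem a hs)
    rw [wordProd_cons, mul_inv_rev, map_mul, map_mul]
    by_cases ha : a ∈ S₁
    · rwa [proj_simple_of_mem cs hS ha, incl_simple, inv_simple, mul_assoc,
        simple_mul_simple_cancel_left]
    · rw [proj_simple_of_notMem cs hS ha, map_one, one_mul, mul_assoc, inv_simple,
        (commute_simple_incl cs hS ha _).eq, ← mul_assoc]
      exact mul_mem hω
        (Subgroup.subset_closure ⟨a, (h a List.mem_cons_self).resolve_left ha, rfl⟩)

theorem incl_proj_of_minRep {J : Set B} {w : W} (hmin : MinRep cs J w)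
    (hsupp : ∀ s : B, s ∉ J → BruhatLE cs (cs.simple s) w → s ∈ S₁) :
    incl cs S₁ (proj cs hS w) = w := by
  obtain ⟨ω, hω, rfl⟩ := cs.exists_isReduced w
  have hmem : ∀ s ∈ ω, s ∈ S₁ ∨ s ∈ J := fun s hs => or_iff_not_imp_right.mpr fun hJ =>
    hsupp s hJ ⟨ω, hω, rfl, [s], List.singleton_sublist.mpr hs, cs.wordProd_singleton s⟩
  have hS₁ : ∀ s ∈ ω, s ∈ S₁ := by
    refine forall_mem_of_length_le_length_proj cs hS ω ?_
    rw [← length_incl cs hS, ← hω.eq]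
    exact hmin _ (wordProd_inv_mul_incl_proj_mem cs hS ω hmem)
  lift ω to List S₁ using hS₁
  rw [← incl_wordProd, proj_incl]

include hS in
theorem minRep_incl {J : Set B} {g : (restrictMatrix M S₁).Group}
    (h : MinRep (restrictSystem M S₁) {a | a.val ∈ J} g) : MinRep cs J (incl cs S₁ g) := by
  intro u hu
  have hproj := proj_mem_parabolic cs hS hu
  rw [map_mul, map_inv, proj_incl] at hproj
  rw [length_incl cs hS]
  exact (h _ hproj).trans (length_proj_le cs hS u)

theorem minRep_proj {J : Set B} {w : W} (hmin : MinRep cs J w)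
    (hw : incl cs S₁ (proj cs hS w) = w) :
    MinRep (restrictSystem M S₁) {a | a.val ∈ J} (proj cs hS w) := by
  intro u hu
  have hincl := incl_mem_parabolic cs S₁ hu
  rw [map_mul, map_inv, hw] at hincl
  rw [← length_incl cs hS, ← length_incl cs hS, hw]
  exact hmin _ hincl

end Restriction

theorem statement_17_general (cs : CoxeterSystem M W) (J S₁ : Set B)
    (hclosed : ∀ s ∈ S₁, ∀ t : B, t ∉ S₁ → M s t = 2) :
    let M' := restrictMatrix M S₁
    let cs' := M'.toCoxeterSystem
    let J' : Set S₁ := {a | a.val ∈ J}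
    ∃ e : {w : W // MinRep cs J w ∧
            ∀ s : B, s ∉ J → BruhatLE cs (cs.simple s) w → s ∈ S₁}
          ≃ {w : M'.Group // MinRep cs' J' w},
      ∀ a b, BruhatLE cs a.val b.val ↔ BruhatLE cs' (e a).val (e b).val := by
  intro M' cs' J'
  have hw (w : {w : W // MinRep cs J w ∧
      ∀ s : B, s ∉ J → BruhatLE cs (cs.simple s) w → s ∈ S₁}) :
      incl cs S₁ (proj cs hclosed w) = w :=
    incl_proj_of_minRep cs hclosed w.2.1 w.2.2
  refine ⟨{
    toFun := fun w => ⟨proj cs hclosed w, minRep_proj cs hclosed w.2.1 (hw w)⟩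
    invFun := fun g => ⟨incl cs S₁ g, minRep_incl cs hclosed g.2,
      fun _ _ hs => mem_of_simple_bruhatLE_incl cs hclosed hs⟩
    left_inv := fun w => Subtype.ext (hw w)
    right_inv := fun g => Subtype.ext (proj_incl cs hclosed g) }, fun a b => ?_⟩
  show _ ↔ BruhatLE cs' (proj cs hclosed a) (proj cs hclosed b)
  rw [← bruhatLE_incl_iff cs hclosed, hw, hw]

/-- if `S₁` is a connected component of the Coxeter graph of `(W,S)`,
then the subposet `{w ∈ W^J : every s ∈ S∖J with s ≤ w lies in S₁}` of `W^J` is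
order-isomorphic to the quotient poset `(W_{S₁})^{S₁ ∩ J}` with the Bruhat order. -/
theorem statement_17 (cs : CoxeterSystem M W) (J S₁ : Set B)
    (hclosed : ∀ s ∈ S₁, ∀ t : B, t ∉ S₁ → M s t = 2)
    (hconn : ∀ s ∈ S₁, ∀ t ∈ S₁,
      Relation.ReflTransGen (fun a b => a ∈ S₁ ∧ b ∈ S₁ ∧ Big M a b) s t) :
    let M' := restrictMatrix M S₁
    let cs' := M'.toCoxeterSystem
    let J' : Set S₁ := {a | a.val ∈ J}
    ∃ e : {w : W // MinRep cs J w ∧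
            ∀ s : B, s ∉ J → BruhatLE cs (cs.simple s) w → s ∈ S₁}
          ≃ {w : M'.Group // MinRep cs' J' w},
      ∀ a b, BruhatLE cs a.val b.val ↔ BruhatLE cs' (e a).val (e b).val :=
  statement_17_general cs J S₁ hclosed

end CoxPaper
end
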